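/- Two probability distributions π, π' on the path set 𝒫 of a directed acyclic graph are path decompositions of the same quasi-flow if and only if π − π' lies in the Ryser subspace ℛ. In particular, for any π ∈ M ⊆ Δ(𝒫), the set of distributions in M decomposing the same quasi-flow as π is exactly (π + ℛ) ∩ M. -/

import Mathlib

open scoped Classical

namespace StmtDAG

variable {N E : Type*} [Fintype N] [Fintype E] [DecidableEq N] [DecidableEq E]

/-- `(src, tgt, s, t)` describes a directed acyclic graph with finite node type `N` and
finite edge type `E` (parallel edges are allowed, since `E` is an abstract type with
endpoint maps): there is no directed cycle, `s` is the unique node with no incoming edge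
(the source), and `t` is the unique node with no outgoing edge (the sink). -/
def IsDAG (src tgt : E → N) (s t : N) : Prop :=
  (∀ a : N, ¬ Relation.TransGen (fun a b => ∃ e, src e = a ∧ tgt e = b) a a) ∧
  (∀ e, tgt e ≠ s) ∧ (∀ e, src e ≠ t) ∧
  (∀ n, (∀ e, tgt e ≠ n) → n = s) ∧
  (∀ n, (∀ e, src e ≠ n) → n = t)

variable (src tgt : E → N) (s t : N)

/-- A path from `s` to `t`: a nonempty list of consecutive edges starting at `s` and
ending at `t`.  (In a DAG these are in bijective correspondence with the edge *sets* in
which `s` and `t` each appear exactly once and every other node appearing at all appears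
exactly once as a head and once as a tail.) -/
structure GPath where
  /-- the edges of the path, in order from the source to the sink -/
  edges : List E
  ne : edges ≠ []
  chain : edges.Chain' fun e f => tgt e = src f
  first : src (edges.head ne) = s
  last : tgt (edges.getLast ne) = t

/-- A quasi-flow: a nonnegative edge weighting such that, at every node other than the
source and the sink, total in-flow equals total out-flow. -/
def IsQuasiFlow (f : E → ℝ) : Prop :=
  (∀ e, 0 ≤ f e) ∧
  ∀ n : N, n ≠ s → n ≠ t →
    (∑ e : E, if tgt e = n then f e else 0) = (∑ e : E, if src e = n then f e else 0)

/-- `π` is a path decomposition of the quasi-flow `f`: a nonnegative weighting of paths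
whose induced edge weights recover `f`. -/
def IsPathDecomp (f : E → ℝ) (π : GPath src tgt s t → ℝ) : Prop :=
  (∀ P, 0 ≤ π P) ∧
  ∀ e : E, f e = ∑ᶠ P : GPath src tgt s t, if e ∈ P.edges then π P else 0

/-- `P.edges = a ++ b`, split exactly at the node `n`. -/
def SplitsAt (P : GPath src tgt s t) (n : N) (a b : List E) : Prop :=
  P.edges = a ++ b ∧ (∀ h : b ≠ [], src (b.head h) = n) ∧ (b = [] → n = t)

/-- `(Q₁, Q₂)` are the `n`-conjugates of the pair `(P₁, P₂)`, both of which pass through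
the node `n`: `Q₁` follows `P₁` up to `n` and `P₂` thereafter, and vice versa. -/
def IsConjAt (n : N) (P₁ P₂ Q₁ Q₂ : GPath src tgt s t) : Prop :=
  ∃ a₁ b₁ a₂ b₂ : List E,
    SplitsAt src tgt s t P₁ n a₁ b₁ ∧ SplitsAt src tgt s t P₂ n a₂ b₂ ∧
    Q₁.edges = a₁ ++ b₂ ∧ Q₂.edges = a₂ ++ b₁

/-- The indicator (point mass) vector of a path. -/
noncomputable def indP (P₀ : GPath src tgt s t) : GPath src tgt s t → ℝ :=
  fun P => if P = P₀ then 1 else 0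

/-- A Ryser swap: `1_{Q₁} + 1_{Q₂} - 1_{P₁} - 1_{P₂}` where `(Q₁, Q₂)` are the
`n`-conjugates of a pair `(P₁, P₂)` compatible at some node `n`. -/
def IsRyserSwap (R : GPath src tgt s t → ℝ) : Prop :=
  ∃ (n : N) (P₁ P₂ Q₁ Q₂ : GPath src tgt s t),
    IsConjAt src tgt s t n P₁ P₂ Q₁ Q₂ ∧
    R = indP src tgt s t Q₁ + indP src tgt s t Q₂ -
          indP src tgt s t P₁ - indP src tgt s t P₂

/-- The Ryser subspace: the linear span of all Ryser swaps. -/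
noncomputable def RyserSub : Submodule ℝ (GPath src tgt s t → ℝ) :=
  Submodule.span ℝ {R | IsRyserSwap src tgt s t R}

/-- `π` is a probability distribution on the path set. -/
def IsDistP (π : GPath src tgt s t → ℝ) : Prop :=
  (∀ P, 0 ≤ π P) ∧ ∑ᶠ P : GPath src tgt s t, π P = 1

/-!
Everything is linear algebra around the edge-load map
`pathFlow : π ↦ (e ↦ ∑_P π(P)·[e ∈ P])`. A Ryser swap exchanges the tails of two paths at a
common node, so it preserves every edge load; and the load of a nonnegative `π` is a
quasi-flow because a path enters and leaves each interior node equally often.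

For the converse fix, for every node `n` on an `s`–`t` path, reference walks `pre n` from `s`
to `n` and `suf n` from `n` to `t` (`refPrefix`, `refSuffix`), and let
`detour e = 1[pre (src e) · e · suf (tgt e)] - 1[pre (src e) · suf (src e)]`. Exchanging
tails one edge at a time along a path `P` gives `1_P ≡ 1[suf s] + ∑_{e ∈ P} detour e` modulo
Ryser swaps, hence `x ≡ (∑_P x P) • 1[suf s] + ∑_e pathFlow x e • detour e`, which vanishes
when `x` has zero load and zero mass, as `π - π'` does.
-/

set_option linter.unusedSectionVars false

section Walks

inductive IsWalk : N → List E → N → Prop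
  | nil (n : N) : IsWalk n [] n
  | cons {e : E} {l : List E} {m : N} : IsWalk (tgt e) l m → IsWalk (src e) (e :: l) m

variable {src tgt} {a b c : N} {l l₁ l₂ : List E}

namespace IsWalk

lemma append (h₁ : IsWalk src tgt a l₁ b) (h₂ : IsWalk src tgt b l₂ c) :
    IsWalk src tgt a (l₁ ++ l₂) c := by
  induction h₁ with
  | nil => exact h₂
  | cons _ ih => exact .cons (ih h₂)

lemma eq_of_nil (h : IsWalk src tgt a [] b) : a = b := by
  cases h; rfl

lemma eq_nil_of_forall_src_ne (hsrc : ∀ e, src e ≠ a) (h : IsWalk src tgt a l b) : l = [] := by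
  cases h with
  | nil => rfl
  | cons => exact absurd rfl (hsrc _)

lemma src_head (h : IsWalk src tgt a l b) (hl : l ≠ []) : src (l.head hl) = a := by
  cases h with
  | nil => exact absurd rfl hl
  | cons => rfl

lemma tgt_getLast (h : IsWalk src tgt a l b) (hl : l ≠ []) : tgt (l.getLast hl) = b := by
  induction h with
  | nil => exact absurd rfl hl
  | @cons e l m hl' ih =>
    rcases eq_or_ne l [] with rfl | hne
    · exact hl'.eq_of_nil
    · rw [List.getLast_cons hne]; exact ih hne

lemma chain (h : IsWalk src tgt a l b) : l.IsChain fun e f => tgt e = src f := by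
  induction h with
  | nil => exact List.isChain_nil
  | @cons e l m hl ih =>
    cases l with
    | nil => exact List.isChain_singleton _
    | cons f l => exact List.isChain_cons_cons.2 ⟨(hl.src_head (List.cons_ne_nil f l)).symm, ih⟩

lemma reflTransGen_src_of_mem (h : IsWalk src tgt a l b) {e : E} (he : e ∈ l) :
    Relation.ReflTransGen (fun a b => ∃ e, src e = a ∧ tgt e = b) a (src e) := by
  induction h with
  | nil => simp at he
  | @cons f l m _ ih =>
    rcases List.mem_cons.1 he with rfl | he
    · exact .refl
    · exact .head ⟨f, rfl, rfl⟩ (ih he)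

lemma nodup
    (hacyc : ∀ a : N, ¬ Relation.TransGen (fun a b => ∃ e, src e = a ∧ tgt e = b) a a)
    (h : IsWalk src tgt a l b) : l.Nodup := by
  induction h with
  | nil => exact List.nodup_nil
  | @cons e l m hl ih =>
    exact List.nodup_cons.2
      ⟨fun he => hacyc _ (.head' ⟨e, rfl, rfl⟩ (hl.reflTransGen_src_of_mem he)), ih⟩

lemma countP_tgt_add (h : IsWalk src tgt a l b) (n : N) :
    l.countP (tgt · = n) + (if a = n then 1 else 0) =
      l.countP (src · = n) + (if b = n then 1 else 0) := by
  induction h with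
  | nil => rfl
  | cons _ ih =>
    simp only [List.countP_cons, decide_eq_true_eq] at ih ⊢
    split_ifs at ih ⊢ <;> omega

end IsWalk

lemma isWalk_of_chain (hc : l.IsChain fun e f => tgt e = src f) (hl : l ≠ []) :
    IsWalk src tgt (src (l.head hl)) l (tgt (l.getLast hl)) := by
  induction l with
  | nil => exact absurd rfl hl
  | cons e l ih =>
    rcases l with _ | ⟨f, l⟩
    · exact .cons (.nil _)
    · have hwalk := ih hc.tail (List.cons_ne_nil f l)
      rw [List.head_cons, ← (List.isChain_cons_cons.1 hc).1] at hwalk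
      simpa only [List.getLast_cons (List.cons_ne_nil f l), List.head_cons] using hwalk.cons

end Walks

section Paths

variable {src tgt s t}

namespace GPath

lemma edges_injective : Function.Injective (GPath.edges : GPath src tgt s t → List E) := by
  rintro ⟨⟩ ⟨⟩ h; cases h; rfl

lemma isWalk (P : GPath src tgt s t) : IsWalk src tgt s P.edges t := by
  simpa only [P.first, P.last] using isWalk_of_chain P.chain P.ne

def ofWalk (hst : s ≠ t) {l : List E} (h : IsWalk src tgt s l t) : GPath src tgt s t where
  edges := l
  ne := by rintro rfl; exact hst h.eq_of_nil
  chain := h.chain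
  first := h.src_head _
  last := h.tgt_getLast _

lemma nodup (hdag : IsDAG src tgt s t) (P : GPath src tgt s t) : P.edges.Nodup :=
  P.isWalk.nodup hdag.1

lemma finite (hdag : IsDAG src tgt s t) : Finite (GPath src tgt s t) :=
  Finite.of_injective (fun P => (⟨P.edges, P.nodup hdag⟩ : {l : List E // l.Nodup}))
    fun _ _ h => edges_injective (congrArg Subtype.val h)

end GPath

lemma indP_eq_single (Q : GPath src tgt s t) : indP src tgt s t Q = Pi.single Q 1 := by
  funext P; simp [indP, Pi.single_apply]

end Paths

lemma sum_ite_count_eq_countP {ι : Type*} [Fintype ι] [DecidableEq ι] (p : ι → Prop)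
    [DecidablePred p] (l : List ι) :
    (∑ i, if p i then (l.count i : ℝ) else 0) = l.countP p := by
  rw [← Finset.sum_filter, ← Finset.sum_filter_count_eq_countP, Nat.cast_sum]
  refine (Finset.sum_subset (Finset.filter_subset_filter _ (Finset.subset_univ _)) ?_).symm
  intro i _ hi
  simp_all [List.count_eq_zero]

lemma sum_map_eq_sum_count_smul {ι M : Type*} [Fintype ι] [DecidableEq ι] [AddCommGroup M]
    [Module ℝ M] (l : List ι) (f : ι → M) :
    (l.map f).sum = ∑ i, (l.count i : ℝ) • f i := by
  rw [Finset.sum_list_map_count]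
  refine Finset.sum_subset (Finset.subset_univ _) (fun i _ hi => ?_) |>.trans ?_
  · rw [List.count_eq_zero_of_not_mem (List.mem_toFinset.not.1 hi), zero_smul]
  · simp only [Nat.cast_smul_eq_nsmul]

section Flow

variable [Fintype (GPath src tgt s t)]

noncomputable def pathFlow : (GPath src tgt s t → ℝ) →ₗ[ℝ] E → ℝ :=
  Fintype.linearCombination ℝ fun P e => (P.edges.count e : ℝ)

variable {src tgt s t}

lemma pathFlow_apply (π : GPath src tgt s t → ℝ) (e : E) :
    pathFlow src tgt s t π e = ∑ P, π P * P.edges.count e := by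
  simp [pathFlow, Fintype.linearCombination_apply, Finset.sum_apply]

lemma pathFlow_nonneg {π : GPath src tgt s t → ℝ} (hπ : ∀ P, 0 ≤ π P) (e : E) :
    0 ≤ pathFlow src tgt s t π e := by
  rw [pathFlow_apply]
  exact Finset.sum_nonneg fun P _ => mul_nonneg (hπ P) (Nat.cast_nonneg _)

lemma sum_ite_pathFlow (π : GPath src tgt s t → ℝ) (v : E → N) (n : N) :
    (∑ e, if v e = n then pathFlow src tgt s t π e else 0) =
      ∑ P, π P * P.edges.countP (v · = n) := by
  simp_rw [pathFlow_apply, ← Finset.sum_filter]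
  rw [Finset.sum_comm]
  refine Finset.sum_congr rfl fun P _ => ?_
  rw [← Finset.mul_sum, Finset.sum_filter, sum_ite_count_eq_countP]

lemma isQuasiFlow_pathFlow {π : GPath src tgt s t → ℝ} (hπ : ∀ P, 0 ≤ π P) :
    IsQuasiFlow src tgt s t (pathFlow src tgt s t π) := by
  refine ⟨pathFlow_nonneg hπ, fun n hns hnt => ?_⟩
  rw [sum_ite_pathFlow, sum_ite_pathFlow]
  refine Finset.sum_congr rfl fun P _ => ?_
  have h := P.isWalk.countP_tgt_add n
  rw [if_neg hns.symm, if_neg hnt.symm] at h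
  exact_mod_cast congrArg (π P * ·) (congrArg Nat.cast h : ((_ : ℕ) : ℝ) = _)

lemma ryserSub_le_ker_pathFlow :
    RyserSub src tgt s t ≤ LinearMap.ker (pathFlow src tgt s t) := by
  refine Submodule.span_le.2 ?_
  rintro _ ⟨n, P₁, P₂, Q₁, Q₂, ⟨a₁, b₁, a₂, b₂, ⟨hP₁, -⟩, ⟨hP₂, -⟩, hQ₁, hQ₂⟩, rfl⟩
  ext e
  simp [pathFlow, indP_eq_single, hP₁, hP₂, hQ₁, hQ₂]
  ring

lemma finsum_ite_mem_eq_pathFlow (hdag : IsDAG src tgt s t) (π : GPath src tgt s t → ℝ)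
    (e : E) : (∑ᶠ P, if e ∈ P.edges then π P else 0) = pathFlow src tgt s t π e := by
  rw [finsum_eq_sum_of_fintype, pathFlow_apply]
  refine Finset.sum_congr rfl fun P _ => ?_
  rw [(P.nodup hdag).count]
  split_ifs <;> simp

lemma isPathDecomp_iff (hdag : IsDAG src tgt s t) {f : E → ℝ} {π : GPath src tgt s t → ℝ} :
    IsPathDecomp src tgt s t f π ↔ (∀ P, 0 ≤ π P) ∧ f = pathFlow src tgt s t π := by
  simp only [IsPathDecomp, finsum_ite_mem_eq_pathFlow hdag, funext_iff]

end Flow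

section Telescope

noncomputable def indOfEdges (l : List E) : GPath src tgt s t → ℝ :=
  fun P => if P.edges = l then 1 else 0

noncomputable def refPrefix (n : N) : List E := Classical.epsilon (IsWalk src tgt s · n)

noncomputable def refSuffix (n : N) : List E := Classical.epsilon (IsWalk src tgt n · t)

noncomputable def detour (e : E) : GPath src tgt s t → ℝ :=
  indOfEdges src tgt s t (refPrefix src tgt s (src e) ++ e :: refSuffix src tgt t (tgt e)) -
    indOfEdges src tgt s t (refPrefix src tgt s (src e) ++ refSuffix src tgt t (src e))

variable {src tgt s t}

lemma indOfEdges_edges (P : GPath src tgt s t) :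
    indOfEdges src tgt s t P.edges = indP src tgt s t P := by
  funext Q
  simp only [indOfEdges, indP, GPath.edges_injective.eq_iff]

lemma indOfEdges_eq_indP_ofWalk (hst : s ≠ t) {l : List E} (h : IsWalk src tgt s l t) :
    indOfEdges src tgt s t l = indP src tgt s t (.ofWalk hst h) :=
  indOfEdges_edges (.ofWalk hst h)

lemma isWalk_refPrefix {u : List E} {n : N} (h : IsWalk src tgt s u n) :
    IsWalk src tgt s (refPrefix src tgt s n) n :=
  Classical.epsilon_spec (p := (IsWalk src tgt s · n)) ⟨u, h⟩

lemma isWalk_refSuffix {v : List E} {n : N} (h : IsWalk src tgt n v t) :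
    IsWalk src tgt n (refSuffix src tgt t n) t :=
  Classical.epsilon_spec (p := (IsWalk src tgt n · t)) ⟨v, h⟩

lemma swap_mem_ryserSub (hst : s ≠ t) {n : N} {a₁ a₂ b₁ b₂ : List E}
    (ha₁ : IsWalk src tgt s a₁ n) (ha₂ : IsWalk src tgt s a₂ n)
    (hb₁ : IsWalk src tgt n b₁ t) (hb₂ : IsWalk src tgt n b₂ t) :
    indOfEdges src tgt s t (a₁ ++ b₂) + indOfEdges src tgt s t (a₂ ++ b₁) -
      indOfEdges src tgt s t (a₁ ++ b₁) - indOfEdges src tgt s t (a₂ ++ b₂) ∈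
      RyserSub src tgt s t := by
  have splitsAt {a b : List E} (ha : IsWalk src tgt s a n) (hb : IsWalk src tgt n b t) :
      SplitsAt src tgt s t (.ofWalk hst (ha.append hb)) n a b :=
    ⟨rfl, hb.src_head, by rintro rfl; exact hb.eq_of_nil⟩
  rw [indOfEdges_eq_indP_ofWalk hst (ha₁.append hb₂),
    indOfEdges_eq_indP_ofWalk hst (ha₂.append hb₁),
    indOfEdges_eq_indP_ofWalk hst (ha₁.append hb₁),
    indOfEdges_eq_indP_ofWalk hst (ha₂.append hb₂)]
  exact Submodule.subset_span ⟨n, _, _, _, _,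
    ⟨a₁, b₁, a₂, b₂, splitsAt ha₁ hb₁, splitsAt ha₂ hb₂, rfl, rfl⟩, rfl⟩

lemma indOfEdges_sub_sum_detour_mem_ryserSub (hst : s ≠ t) (hsrc : ∀ e, src e ≠ t)
    {u v : List E} {m : N} (hu : IsWalk src tgt s u m) (hv : IsWalk src tgt m v t) :
    indOfEdges src tgt s t (u ++ v) - indOfEdges src tgt s t (u ++ refSuffix src tgt t m) -
      (v.map (detour src tgt s t)).sum ∈ RyserSub src tgt s t := by
  induction v generalizing u m with
  | nil =>
    obtain rfl := hv.eq_of_nil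
    simp [(isWalk_refSuffix hv).eq_nil_of_forall_src_ne hsrc]
  | cons e v ih =>
    obtain _ | hv := hv
    have hswap := swap_mem_ryserSub hst hu (isWalk_refPrefix hu) (isWalk_refSuffix hv.cons)
      (isWalk_refSuffix hv).cons
    have hrest := ih (hu.append (.cons (.nil _))) hv
    simp only [List.append_assoc, List.singleton_append] at hrest
    convert Submodule.add_mem _ hrest hswap using 1
    simp only [detour, List.map_cons, List.sum_cons]
    abel

end Telescope

section Kernel

variable {src tgt s t}

lemma mem_ryserSub_of_pathFlow_eq_zero [Fintype (GPath src tgt s t)] (hsrc : ∀ e, src e ≠ t)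
    {x : GPath src tgt s t → ℝ} (hflow : pathFlow src tgt s t x = 0) (hmass : ∑ P, x P = 0) :
    x ∈ RyserSub src tgt s t := by
  rcases isEmpty_or_nonempty (GPath src tgt s t) with _ | ⟨⟨P₀⟩⟩
  · rw [Subsingleton.elim x 0]
    exact Submodule.zero_mem _
  have hst : s ≠ t := fun h => hsrc _ (P₀.first.trans h)
  set ref := indOfEdges src tgt s t (refSuffix src tgt t s)
  have hpath (P : GPath src tgt s t) :
      indP src tgt s t P - (ref + (P.edges.map (detour src tgt s t)).sum) ∈
        RyserSub src tgt s t := by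
    have h := indOfEdges_sub_sum_detour_mem_ryserSub hst hsrc (.nil s) P.isWalk
    rw [List.nil_append, List.nil_append, indOfEdges_edges] at h
    rwa [sub_add_eq_sub_sub]
  have hnormal : ∑ P, x P • (ref + (P.edges.map (detour src tgt s t)).sum) = 0 :=
    calc ∑ P, x P • (ref + (P.edges.map (detour src tgt s t)).sum)
        = (∑ P, x P) • ref + ∑ e, pathFlow src tgt s t x e • detour src tgt s t e := by
          simp_rw [smul_add, Finset.sum_add_distrib, ← Finset.sum_smul,
            sum_map_eq_sum_count_smul, Finset.smul_sum, smul_smul, pathFlow_apply,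
            Finset.sum_smul]
          rw [Finset.sum_comm]
      _ = 0 := by simp [hmass, hflow]
  have hx : x = ∑ P, x P • indP src tgt s t P := by
    funext Q
    simp [indP]
  have hsum := Submodule.sum_mem (RyserSub src tgt s t) (t := Finset.univ) fun P _ =>
    Submodule.smul_mem _ (x P) (hpath P)
  simp_rw [smul_sub, Finset.sum_sub_distrib, ← hx, hnormal, sub_zero] at hsum
  exact hsum

lemma exists_quasiFlow_decomp_iff (hdag : IsDAG src tgt s t) {π π' : GPath src tgt s t → ℝ}
    (hπ : IsDistP src tgt s t π) (hπ' : IsDistP src tgt s t π') :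
    (∃ f : E → ℝ, IsQuasiFlow src tgt s t f ∧
        IsPathDecomp src tgt s t f π ∧ IsPathDecomp src tgt s t f π') ↔
      π - π' ∈ RyserSub src tgt s t := by
  have := @Fintype.ofFinite _ (GPath.finite hdag)
  simp only [isPathDecomp_iff hdag]
  constructor
  · rintro ⟨f, -, ⟨-, rfl⟩, -, hflow⟩
    refine mem_ryserSub_of_pathFlow_eq_zero hdag.2.2.1 (by rw [map_sub, hflow, sub_self]) ?_
    have hmass := hπ.2
    have hmass' := hπ'.2
    rw [finsum_eq_sum_of_fintype] at hmass hmass'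
    simp only [Pi.sub_apply, Finset.sum_sub_distrib, hmass, hmass', sub_self]
  · intro hR
    refine ⟨_, isQuasiFlow_pathFlow hπ.1, ⟨hπ.1, rfl⟩, hπ'.1, ?_⟩
    rw [← sub_eq_zero, ← map_sub]
    exact ryserSub_le_ker_pathFlow hR

end Kernel

theorem statement13 (hdag : IsDAG src tgt s t) :
    (∀ π π' : GPath src tgt s t → ℝ, IsDistP src tgt s t π → IsDistP src tgt s t π' →
      ((∃ f : E → ℝ, IsQuasiFlow src tgt s t f ∧
          IsPathDecomp src tgt s t f π ∧ IsPathDecomp src tgt s t f π') ↔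
        π - π' ∈ RyserSub src tgt s t)) ∧
    (∀ M : Set (GPath src tgt s t → ℝ), (∀ ρ ∈ M, IsDistP src tgt s t ρ) →
      ∀ π ∈ M,
        {π' | π' ∈ M ∧ ∃ f : E → ℝ, IsQuasiFlow src tgt s t f ∧
            IsPathDecomp src tgt s t f π ∧ IsPathDecomp src tgt s t f π'} =
          {π' | (∃ r ∈ RyserSub src tgt s t, π' = π + r) ∧ π' ∈ M}) := by
  refine ⟨fun π π' => exists_quasiFlow_decomp_iff hdag, fun M hM π hπ => ?_⟩
  ext π'
  simp only [Set.mem_ofPred_eq]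
  constructor
  · rintro ⟨hπ', h⟩
    have hR := neg_mem ((exists_quasiFlow_decomp_iff hdag (hM π hπ) (hM π' hπ')).1 h)
    exact ⟨⟨π' - π, by rwa [neg_sub] at hR, by abel⟩, hπ'⟩
  · rintro ⟨⟨r, hr, rfl⟩, hπr⟩
    refine ⟨hπr, (exists_quasiFlow_decomp_iff hdag (hM π hπ) (hM _ hπr)).2 ?_⟩
    simpa using neg_mem hr

end StmtDAG
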